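/- arXiv:1308.2046 — 5 statements merged into one kernel-verified Lean document; each statement's English description precedes it below -/
import Mathlib

section
/- For every λ > 0 there exists a jointly continuous one-parameter family Θ : [0,π] × Pol₂(7;λ) → Pol₂(7;λ) such that: (i) for every θ ∈ [0,π] the map Θ(θ,·) is a bijection of Pol₂(7;λ) onto itself; (ii) Θ(0,·) is the identity; (iii) Θ(π,·) sends each polygon (e₁,…,e₇) to its mirror image with respect to the axis {x=0}, i.e. Θ(π,e)ᵢ = −conj(eᵢ) for every i; and (iv) for every θ, every polygon, and every index i, Im(Θ(θ,e)ᵢ) = Im(eᵢ) (the projection of each polygon onto the axis {x=0} is kept). (The paper states moreover that each Θ(θ,·) is an isometry; here each Θ(θ,·) is required to be a continuous bijection.) -/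
open Finset in
/-- `Pol₂(n;λ)`: the space of closed `n`-gons in the plane `ℂ` of total length `2λ`. -/
def Pol2 (n : ℕ) (lam : ℝ) : Set (Fin n → ℂ) :=
  {e | ∑ i, e i = 0 ∧ ∑ i, ‖e i‖ = 2 * lam}

/-!
Write a polygon as `e = x + i y` with `x, y ∈ ℝ⁷` both summing to zero. The hyperplane
`∑ x = 0` of `ℝ⁷` is six-dimensional, so it carries a complex structure `J`, and
`cos θ + sin θ J` turns it from the identity at `θ = 0` to `-1` at `θ = π`. Rotating the real
parts this way and rescaling them by the unique factor `s ≥ 0` that restores the length `2λ`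
(the length is monotone in `s`, strictly unless the real parts vanish) keeps the imaginary parts
and ends at the mirror image. The time `-θ` map inverts the time `θ` map, and joint continuity
holds because the defining relation is closed and `Pol₂(7;λ)` is compact.
-/

open Finset

theorem continuous_of_isClosed_graph_of_compactSpace {X Y : Type*} [TopologicalSpace X]
    [TopologicalSpace Y] [CompactSpace Y] {f : X → Y}
    (hf : IsClosed {p : X × Y | p.2 = f p.1}) : Continuous f := by
  refine continuous_iff_isClosed.mpr fun s hs => ?_
  have hpre : f ⁻¹' s = Prod.fst '' ({p : X × Y | p.2 = f p.1} ∩ Prod.snd ⁻¹' s) := by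
    ext x
    simp
  rw [hpre]
  exact isClosedMap_fst_of_compactSpace _ (hf.inter (hs.preimage continuous_snd))

theorem isCompact_Pol2 (n : ℕ) (lam : ℝ) : IsCompact (Pol2 n lam) := by
  refine Metric.isCompact_of_isClosed_isBounded ?_ ?_
  · exact (isClosed_eq (by fun_prop) continuous_const).inter
      (isClosed_eq (by fun_prop) continuous_const)
  · refine isBounded_iff_forall_norm_le.mpr ⟨2 * lam, fun e he => ?_⟩
    rw [← he.2]
    exact (pi_norm_le_iff_of_nonneg (sum_nonneg fun i _ => norm_nonneg _)).mpr fun i =>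
      single_le_sum (f := fun i => ‖e i‖) (fun i _ => norm_nonneg _) (mem_univ i)

theorem Complex.norm_le_norm_of_im_eq {z w : ℂ} (him : z.im = w.im) (hre : |z.re| ≤ |w.re|) :
    ‖z‖ ≤ ‖w‖ := by
  rw [Complex.norm_eq_sqrt_sq_add_sq, Complex.norm_eq_sqrt_sq_add_sq, him]
  exact Real.sqrt_le_sqrt (add_le_add_left (sq_le_sq.mpr hre) _)

theorem SameRay.forall_abs_le_or_forall_abs_le {ι : Type*} {x y : ι → ℝ} (h : SameRay ℝ x y) :
    (∀ i, |x i| ≤ |y i|) ∨ ∀ i, |y i| ≤ |x i| := by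
  obtain ⟨u, a, b, ha, hb, -, rfl, rfl⟩ := h.exists_eq_smul
  rcases le_total a b with hab | hab
  · left; intro i
    simp only [Pi.smul_apply, smul_eq_mul, abs_mul, abs_of_nonneg ha, abs_of_nonneg hb]
    gcongr
  · right; intro i
    simp only [Pi.smul_apply, smul_eq_mul, abs_mul, abs_of_nonneg ha, abs_of_nonneg hb]
    gcongr

theorem eq_of_sameRay_re {n : ℕ} {e₁ e₂ : Fin n → ℂ} (him : ∀ i, (e₁ i).im = (e₂ i).im)
    (hre : SameRay ℝ (Complex.re ∘ e₁) (Complex.re ∘ e₂))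
    (hlen : ∑ i, ‖e₁ i‖ = ∑ i, ‖e₂ i‖) : e₁ = e₂ := by
  have hnorm : ∀ i, ‖e₁ i‖ = ‖e₂ i‖ := by
    rcases hre.forall_abs_le_or_forall_abs_le with hle | hle
    · intro i
      exact (sum_eq_sum_iff_of_le fun i _ => Complex.norm_le_norm_of_im_eq (him i) (hle i)).mp
        hlen i (mem_univ i)
    · intro i
      exact ((sum_eq_sum_iff_of_le fun i _ =>
        Complex.norm_le_norm_of_im_eq (him i).symm (hle i)).mp hlen.symm i (mem_univ i)).symm
  funext i
  refine Complex.ext ?_ (him i)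
  refine (hre.map (LinearMap.proj i)).eq_of_norm_eq ?_
  have hsq := congrArg (· ^ 2) (hnorm i)
  simp only [Complex.sq_norm, Complex.normSq_apply, him i] at hsq
  simp only [LinearMap.proj_apply, Function.comp_apply, Real.norm_eq_abs]
  exact sq_eq_sq_iff_abs_eq_abs _ _ |>.mp (by linarith)

theorem exists_mem_Pol2_im_eq_sameRay {n : ℕ} {lam : ℝ} {u y : Fin n → ℝ}
    (hu : ∑ i, u i = 0) (hu₀ : u ≠ 0) (hy : ∑ i, y i = 0) (hlen : ∑ i, |y i| ≤ 2 * lam) :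
    ∃ e ∈ Pol2 n lam, (∀ i, (e i).im = y i) ∧ SameRay ℝ u (Complex.re ∘ e) := by
  set g : ℝ → ℝ := fun s => ∑ i, ‖(⟨s * u i, y i⟩ : ℂ)‖
  obtain ⟨j, hj⟩ := Function.ne_iff.mp hu₀
  have hlam : 0 ≤ 2 * lam := (sum_nonneg fun i _ => abs_nonneg (y i)).trans hlen
  set S := 2 * lam / |u j|
  have hS : 0 ≤ S := by positivity
  have hg₀ : g 0 ≤ 2 * lam := by simpa [g, Complex.norm_eq_sqrt_sq_add_sq, Real.sqrt_sq_eq_abs]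
  have hgS : 2 * lam ≤ g S := calc
    2 * lam = |S * u j| := by rw [abs_mul, abs_of_nonneg hS, div_mul_cancel₀ _ (abs_ne_zero.mpr hj)]
    _ ≤ ‖(⟨S * u j, y j⟩ : ℂ)‖ := Complex.abs_re_le_norm ⟨S * u j, y j⟩
    _ ≤ g S := single_le_sum (f := fun i => ‖(⟨S * u i, y i⟩ : ℂ)‖)
        (fun i _ => norm_nonneg _) (mem_univ j)
  have hg : Continuous g := by
    simp only [g, Complex.norm_eq_sqrt_sq_add_sq]
    fun_prop
  obtain ⟨s, hs, hgs⟩ := intermediate_value_Icc hS hg.continuousOn ⟨hg₀, hgS⟩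
  refine ⟨fun i => ⟨s * u i, y i⟩, ⟨?_, hgs⟩, fun i => rfl, ?_⟩
  · apply Complex.ext <;> simp [Complex.re_sum, Complex.im_sum, ← mul_sum, hu, hy]
  · exact SameRay.sameRay_nonneg_smul_right u hs.1

section Rotation

variable {n : ℕ} (J : (Fin n → ℝ) →ₗ[ℝ] (Fin n → ℝ))

structure IsSumZeroComplexStructure : Prop where
  sum_apply : ∀ x, ∑ i, J x i = 0
  apply_apply : ∀ x, ∑ i, x i = 0 → J (J x) = -x

/-- `exp (θ J)`, a rotation of the sum-zero hyperplane when `J` is a complex structure on it. -/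
noncomputable def jRotation (θ : ℝ) : (Fin n → ℝ) →ₗ[ℝ] (Fin n → ℝ) :=
  Real.cos θ • LinearMap.id + Real.sin θ • J

theorem jRotation_apply (θ : ℝ) (x : Fin n → ℝ) :
    jRotation J θ x = Real.cos θ • x + Real.sin θ • J x := rfl

theorem jRotation_zero_apply (x : Fin n → ℝ) : jRotation J 0 x = x := by
  simp [jRotation_apply]

theorem jRotation_pi_apply (x : Fin n → ℝ) : jRotation J Real.pi x = -x := by
  simp [jRotation_apply]

theorem continuous_jRotation : Continuous fun p : ℝ × (Fin n → ℝ) => jRotation J p.1 p.2 := by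
  have := J.continuous_of_finiteDimensional
  simp only [jRotation_apply]
  fun_prop

variable {J}

theorem IsSumZeroComplexStructure.sum_jRotation_apply (hJ : IsSumZeroComplexStructure J)
    (θ : ℝ) {x : Fin n → ℝ} (hx : ∑ i, x i = 0) : ∑ i, jRotation J θ x i = 0 := by
  simp [jRotation_apply, sum_add_distrib, ← mul_sum, hx, hJ.sum_apply]

theorem IsSumZeroComplexStructure.jRotation_neg_jRotation_apply
    (hJ : IsSumZeroComplexStructure J) (θ : ℝ) {x : Fin n → ℝ} (hx : ∑ i, x i = 0) :
    jRotation J (-θ) (jRotation J θ x) = x := by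
  simp only [jRotation_apply, map_add, map_smul, hJ.apply_apply x hx, Real.cos_neg, Real.sin_neg]
  linear_combination (norm := module) Real.sin_sq_add_cos_sq θ • x

end Rotation

theorem sum_re_comp_eq_zero {n : ℕ} {e : Fin n → ℂ} (he : ∑ i, e i = 0) :
    ∑ i, (Complex.re ∘ e) i = 0 := by
  simpa [Complex.re_sum] using congrArg Complex.re he

theorem sum_im_comp_eq_zero {n : ℕ} {e : Fin n → ℂ} (he : ∑ i, e i = 0) :
    ∑ i, (Complex.im ∘ e) i = 0 := by
  simpa [Complex.im_sum] using congrArg Complex.im he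

theorem neg_conj_mem_Pol2 {n : ℕ} {lam : ℝ} {e : Fin n → ℂ} (he : e ∈ Pol2 n lam) :
    (fun i => -(starRingEnd ℂ) (e i)) ∈ Pol2 n lam := by
  refine ⟨?_, ?_⟩
  · rw [sum_neg_distrib, ← map_sum, he.1, map_zero, neg_zero]
  · simpa only [norm_neg, Complex.norm_conj] using he.2

section RescaledRotation

variable {n : ℕ} (J : (Fin n → ℝ) →ₗ[ℝ] (Fin n → ℝ))

/-- `SameRay` rather than `∃ s ≥ 0, x' = s • u` makes the relation closed; when the rotated real
parts `u` vanish it says nothing, and the length constraint alone pins `e'` down. -/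
def IsRescaledRotation (θ : ℝ) (e e' : Fin n → ℂ) : Prop :=
  (∀ i, (e' i).im = (e i).im) ∧ SameRay ℝ (jRotation J θ (Complex.re ∘ e)) (Complex.re ∘ e')

variable {J}

theorem isRescaledRotation_zero (e : Fin n → ℂ) : IsRescaledRotation J 0 e e :=
  ⟨fun _ => rfl, by rw [jRotation_zero_apply]⟩

theorem isRescaledRotation_pi (e : Fin n → ℂ) :
    IsRescaledRotation J Real.pi e fun i => -(starRingEnd ℂ) (e i) := by
  refine ⟨fun i => by simp, ?_⟩
  convert SameRay.refl (R := ℝ) (-(Complex.re ∘ e)) using 1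
  · exact jRotation_pi_apply J _
  · ext i; simp

variable (J) in
theorem isClosed_setOf_isRescaledRotation :
    IsClosed {p : (ℝ × (Fin n → ℂ)) × (Fin n → ℂ) | IsRescaledRotation J p.1.1 p.1.2 p.2} := by
  have hre : Continuous fun e : Fin n → ℂ => Complex.re ∘ e :=
    continuous_pi fun i => Complex.continuous_re.comp (continuous_apply i)
  have hrot := continuous_jRotation J
  simp only [IsRescaledRotation, Set.ofPred_and, Set.ofPred_forall, sameRay_iff_norm_smul_eq]
  exact (isClosed_iInter fun i => isClosed_eq (by fun_prop) (by fun_prop)).inter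
    (isClosed_eq (by fun_prop) (by fun_prop))

end RescaledRotation

namespace IsSumZeroComplexStructure

variable {n : ℕ} {lam θ : ℝ} {J : (Fin n → ℝ) →ₗ[ℝ] (Fin n → ℝ)} {e e' : Fin n → ℂ}
  (hJ : IsSumZeroComplexStructure J)
include hJ

theorem isRescaledRotation_symm (he : ∑ i, e i = 0) (h : IsRescaledRotation J θ e e') :
    IsRescaledRotation J (-θ) e' e := by
  refine ⟨fun i => (h.1 i).symm, ?_⟩
  simpa [hJ.jRotation_neg_jRotation_apply θ (sum_re_comp_eq_zero he)] using
    (h.2.map (jRotation J (-θ))).symm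

theorem exists_isRescaledRotation (θ : ℝ) (he : e ∈ Pol2 n lam) :
    ∃ e' ∈ Pol2 n lam, IsRescaledRotation J θ e e' := by
  by_cases hu : jRotation J θ (Complex.re ∘ e) = 0
  · exact ⟨e, he, fun i => rfl, hu ▸ SameRay.zero_left _⟩
  have hlen : ∑ i, |(Complex.im ∘ e) i| ≤ 2 * lam :=
    he.2 ▸ sum_le_sum fun i _ => Complex.abs_im_le_norm (e i)
  exact exists_mem_Pol2_im_eq_sameRay (hJ.sum_jRotation_apply θ (sum_re_comp_eq_zero he.1)) hu
    (sum_im_comp_eq_zero he.1) hlen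

theorem eq_of_isRescaledRotation {e₁ e₂ : Fin n → ℂ} (he : e ∈ Pol2 n lam)
    (he₁ : e₁ ∈ Pol2 n lam) (he₂ : e₂ ∈ Pol2 n lam) (h₁ : IsRescaledRotation J θ e e₁)
    (h₂ : IsRescaledRotation J θ e e₂) : e₁ = e₂ := by
  by_cases hu : jRotation J θ (Complex.re ∘ e) = 0
  · have hre : Complex.re ∘ e = 0 := by
      rw [← hJ.jRotation_neg_jRotation_apply θ (sum_re_comp_eq_zero he.1), hu, map_zero]
    have heq : ∀ e', e' ∈ Pol2 n lam → IsRescaledRotation J θ e e' → e = e' := fun e' he' h' =>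
      eq_of_sameRay_re (fun i => (h'.1 i).symm) (hre ▸ SameRay.zero_left _) (he.2.trans he'.2.symm)
    exact (heq e₁ he₁ h₁).symm.trans (heq e₂ he₂ h₂)
  · exact eq_of_sameRay_re (fun i => (h₁.1 i).trans (h₂.1 i).symm)
      (h₁.2.symm.trans h₂.2 fun h => absurd h hu) (he₁.2.trans he₂.2.symm)

variable (lam) in
noncomputable def rescaledRotation (p : ℝ × Pol2 n lam) : Pol2 n lam :=
  ⟨(hJ.exists_isRescaledRotation p.1 p.2.2).choose,
    (hJ.exists_isRescaledRotation p.1 p.2.2).choose_spec.1⟩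

theorem isRescaledRotation_rescaledRotation (p : ℝ × Pol2 n lam) :
    IsRescaledRotation J p.1 p.2 (hJ.rescaledRotation lam p) :=
  (hJ.exists_isRescaledRotation p.1 p.2.2).choose_spec.2

theorem rescaledRotation_eq {θ : ℝ} {e e' : Pol2 n lam}
    (h : IsRescaledRotation J θ e e') : hJ.rescaledRotation lam (θ, e) = e' :=
  Subtype.ext <| hJ.eq_of_isRescaledRotation e.2 (hJ.rescaledRotation lam (θ, e)).2 e'.2
    (hJ.isRescaledRotation_rescaledRotation (θ, e)) h

theorem rescaledRotation_neg_rescaledRotation (θ : ℝ) (e : Pol2 n lam) :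
    hJ.rescaledRotation lam (-θ, hJ.rescaledRotation lam (θ, e)) = e :=
  hJ.rescaledRotation_eq <|
    hJ.isRescaledRotation_symm e.2.1 (hJ.isRescaledRotation_rescaledRotation (θ, e))

theorem bijective_rescaledRotation (θ : ℝ) :
    Function.Bijective fun e : Pol2 n lam => hJ.rescaledRotation lam (θ, e) := by
  refine Function.bijective_iff_has_inverse.mpr
    ⟨fun e => hJ.rescaledRotation lam (-θ, e), hJ.rescaledRotation_neg_rescaledRotation θ, ?_⟩
  intro e
  simpa using hJ.rescaledRotation_neg_rescaledRotation (-θ) e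

theorem continuous_rescaledRotation : Continuous (hJ.rescaledRotation lam) := by
  have : CompactSpace (Pol2 n lam) := isCompact_iff_compactSpace.mp (isCompact_Pol2 n lam)
  refine continuous_of_isClosed_graph_of_compactSpace ?_
  have hgraph : {p : (ℝ × Pol2 n lam) × Pol2 n lam | p.2 = hJ.rescaledRotation lam p.1} =
      (fun p => ((p.1.1, (p.1.2 : Fin n → ℂ)), (p.2 : Fin n → ℂ))) ⁻¹'
        {p | IsRescaledRotation J p.1.1 p.1.2 p.2} := by
    ext ⟨⟨θ, e⟩, e'⟩
    simp only [Set.mem_ofPred_eq, Set.mem_preimage]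
    constructor
    · rintro rfl
      exact hJ.isRescaledRotation_rescaledRotation (θ, e)
    · exact fun h => (hJ.rescaledRotation_eq h).symm
  rw [hgraph]
  exact (isClosed_setOf_isRescaledRotation J).preimage (by fun_prop)

end IsSumZeroComplexStructure

/-- In the coordinates `x₀, …, x₅` of the hyperplane `∑ x = 0` of `ℝ⁷`, the standard complex
structure of `ℝ⁶`; the last coordinate is forced by the sum. -/
def sumZeroComplexStructure₇ : (Fin 7 → ℝ) →ₗ[ℝ] (Fin 7 → ℝ) where
  toFun x := ![-x 1, x 0, -x 3, x 2, -x 5, x 4, -(x 0 - x 1 + x 2 - x 3 + x 4 - x 5)]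
  map_add' x y := by ext i; fin_cases i <;> simp <;> ring
  map_smul' c x := by ext i; fin_cases i <;> simp [mul_sub, mul_add]

theorem isSumZeroComplexStructure_sumZeroComplexStructure₇ :
    IsSumZeroComplexStructure sumZeroComplexStructure₇ where
  sum_apply x := by simp [Fin.sum_univ_seven, sumZeroComplexStructure₇]; ring
  apply_apply x hx := by
    rw [Fin.sum_univ_seven] at hx
    ext i; fin_cases i <;> simp [sumZeroComplexStructure₇]; linarith

theorem pol2_seven_mirror_isotopy_general (lam : ℝ) :
    ∃ Θ : Set.Icc (0 : ℝ) Real.pi × Pol2 7 lam → Pol2 7 lam,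
      Continuous Θ ∧
      (∀ θ : Set.Icc (0 : ℝ) Real.pi, Function.Bijective (fun e => Θ (θ, e))) ∧
      (∀ e, Θ (⟨0, Set.mem_Icc.mpr ⟨le_refl 0, Real.pi_nonneg⟩⟩, e) = e) ∧
      (∀ e (i : Fin 7),
        (Θ (⟨Real.pi, Set.mem_Icc.mpr ⟨Real.pi_nonneg, le_refl Real.pi⟩⟩, e)).1 i =
          -(starRingEnd ℂ) (e.1 i)) ∧
      (∀ (θ : Set.Icc (0 : ℝ) Real.pi) e (i : Fin 7),
        ((Θ (θ, e)).1 i).im = (e.1 i).im) := by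
  have hJ := isSumZeroComplexStructure_sumZeroComplexStructure₇
  refine ⟨fun p => hJ.rescaledRotation lam (p.1, p.2), ?_, fun θ => hJ.bijective_rescaledRotation θ,
    fun e => hJ.rescaledRotation_eq (θ := 0) (isRescaledRotation_zero _), fun e i => ?_,
    fun θ e => (hJ.isRescaledRotation_rescaledRotation (θ, e)).1⟩
  · exact hJ.continuous_rescaledRotation.comp (by fun_prop)
  · exact congrFun (congrArg Subtype.val (hJ.rescaledRotation_eq (θ := Real.pi)
      (e' := ⟨_, neg_conj_mem_Pol2 e.2⟩) (isRescaledRotation_pi _))) i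

/-- There is a jointly continuous one-parameter family of continuous bijections of
`Pol₂(7;λ)` which starts at the identity, ends at the mirror reflection
`eᵢ ↦ −conj(eᵢ)` across the axis `{x = 0}`, and keeps the projection of each polygon
onto the axis `{x = 0}` (i.e. the imaginary parts of all the edges) at all times. -/
theorem pol2_seven_mirror_isotopy (lam : ℝ) (hlam : 0 < lam) :
    ∃ Θ : Set.Icc (0 : ℝ) Real.pi × Pol2 7 lam → Pol2 7 lam,
      Continuous Θ ∧
      (∀ θ : Set.Icc (0 : ℝ) Real.pi, Function.Bijective (fun e => Θ (θ, e))) ∧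
      (∀ e, Θ (⟨0, Set.mem_Icc.mpr ⟨le_refl 0, Real.pi_nonneg⟩⟩, e) = e) ∧
      (∀ e (i : Fin 7),
        (Θ (⟨Real.pi, Set.mem_Icc.mpr ⟨Real.pi_nonneg, le_refl Real.pi⟩⟩, e)).1 i =
          -(starRingEnd ℂ) (e.1 i)) ∧
      (∀ (θ : Set.Icc (0 : ℝ) Real.pi) e (i : Fin 7),
        ((Θ (θ, e)).1 i).im = (e.1 i).im) :=
  pol2_seven_mirror_isotopy_general lam
end

section
/- Let n ≥ 1, λ > 0, and let z : Fin n → ℂ satisfy ∑ᵢ (Re zᵢ)(Im zᵢ) = 0, ∑ᵢ (Re zᵢ)² = λ, and ∑ᵢ (Im zᵢ)² = λ. Then the coordinatewise squaring map H(z) = (z₁², …, zₙ²) lands in Pol₂(n;λ): ∑ᵢ zᵢ² = 0 and ∑ᵢ |zᵢ²| = 2λ. -/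
/-! The real and imaginary parts of `∑ zᵢ²` are `|a|² - |b|²` and `2⟨a, b⟩`, where `a = Re z` and
`b = Im z`, so both vanish on the Stiefel manifold; and `|zᵢ²| = aᵢ² + bᵢ²` sums to `|a|² + |b|²`. -/

namespace Complex

variable {ι : Type*}

theorem norm_sq_eq_re_sq_add_im_sq (z : ℂ) : ‖z ^ 2‖ = z.re ^ 2 + z.im ^ 2 := by
  rw [norm_pow, Complex.sq_norm, normSq_apply]
  ring

theorem re_sum_sq (s : Finset ι) (z : ι → ℂ) :
    (∑ i ∈ s, z i ^ 2).re = ∑ i ∈ s, (z i).re ^ 2 - ∑ i ∈ s, (z i).im ^ 2 := by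
  simp only [re_sum, ← Finset.sum_sub_distrib, sq, mul_re]

theorem im_sum_sq (s : Finset ι) (z : ι → ℂ) :
    (∑ i ∈ s, z i ^ 2).im = 2 * ∑ i ∈ s, (z i).re * (z i).im := by
  simp only [im_sum, Finset.mul_sum, sq, mul_im]
  exact Finset.sum_congr rfl fun i _ ↦ by ring

end Complex

open Finset in
theorem squaring_lands_in_Pol2_general (n : ℕ) (lam : ℝ)
    (z : Fin n → ℂ)
    (hab : ∑ i, (z i).re * (z i).im = 0)
    (ha : ∑ i, (z i).re ^ 2 = lam)
    (hb : ∑ i, (z i).im ^ 2 = lam) :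
    ∑ i, (z i) ^ 2 = 0 ∧ ∑ i, ‖(z i) ^ 2‖ = 2 * lam := by
  refine ⟨Complex.ext ?_ ?_, ?_⟩
  · rw [Complex.re_sum_sq, ha, hb, sub_self, Complex.zero_re]
  · rw [Complex.im_sum_sq, hab, mul_zero, Complex.zero_im]
  · rw [sum_congr rfl fun i _ ↦ Complex.norm_sq_eq_re_sq_add_im_sq (z i), sum_add_distrib, ha, hb,
      two_mul]

open Finset in
/-- The Hausmann–Knutson coordinatewise squaring map `H(z) = (z₁², …, zₙ²)` carries a
point of the (rescaled) real Stiefel manifold `V₂(ℝⁿ)` to a closed `n`-gon in the plane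
of total length `2λ`, i.e. a point of `Pol₂(n;λ)`. -/
theorem squaring_lands_in_Pol2 (n : ℕ) (hn : 1 ≤ n) (lam : ℝ) (hlam : 0 < lam)
    (z : Fin n → ℂ)
    (hab : ∑ i, (z i).re * (z i).im = 0)
    (ha : ∑ i, (z i).re ^ 2 = lam)
    (hb : ∑ i, (z i).im ^ 2 = lam) :
    ∑ i, (z i) ^ 2 = 0 ∧ ∑ i, ‖(z i) ^ 2‖ = 2 * lam :=
  squaring_lands_in_Pol2_general n lam z hab ha hb
end

section
/- The fibers of the Hopf map are the orbits of left multiplication by unit complex numbers: if p, q ∈ ℍ with q ≠ 0 satisfy (star p) * i * p = (star q) * i * q, then there exist real numbers a, b with a² + b² = 1 such that p = (a + b i) * q. -/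
/-- The imaginary unit `i` of the quaternions. -/
def quatI : Quaternion ℝ := ⟨0, 1, 0, 0⟩

/-- The complex number `a + b i`, embedded in the quaternions as the span of `1` and `i`. -/
def quatC (a b : ℝ) : Quaternion ℝ := ⟨a, b, 0, 0⟩

/-!
Put `u = p q⁻¹`, so that `star u * i * u = i`. Taking norms gives `|u| = 1`, hence
`star u = u⁻¹` and `u` commutes with `i`; the quaternions commuting with `i` are exactly
the complex numbers.
-/

open Quaternion

@[simp] theorem quatI_re : quatI.re = 0 := rfl
@[simp] theorem quatI_imI : quatI.imI = 1 := rfl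
@[simp] theorem quatI_imJ : quatI.imJ = 0 := rfl
@[simp] theorem quatI_imK : quatI.imK = 0 := rfl

theorem quatI_ne_zero : quatI ≠ 0 := fun h => by
  simpa using congrArg QuaternionAlgebra.imI h

theorem commute_quatI_iff (u : ℍ[ℝ]) : Commute quatI u ↔ u.imJ = 0 ∧ u.imK = 0 := by
  constructor
  · intro h
    have hJ := congrArg QuaternionAlgebra.imJ h.eq
    have hK := congrArg QuaternionAlgebra.imK h.eq
    simp only [imJ_mul, imK_mul, quatI_re, quatI_imI, quatI_imJ, quatI_imK] at hJ hK
    constructor <;> linarith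
  · rintro ⟨hJ, hK⟩
    ext <;> simp [hJ, hK]

theorem normSq_eq_one_of_star_mul_mul_eq {u x : ℍ[ℝ]} (hx : x ≠ 0) (h : star u * x * u = x) :
    normSq u = 1 := by
  have hsq : normSq u * normSq u = 1 := by
    have := congrArg normSq h
    simp only [map_mul, normSq_star] at this
    rwa [mul_right_comm, mul_left_eq_self₀, or_iff_left (normSq_ne_zero.2 hx)] at this
  nlinarith [normSq_nonneg (a := u)]

theorem commute_of_star_mul_mul_eq {u x : ℍ[ℝ]} (hx : x ≠ 0) (h : star u * x * u = x) :
    Commute x u := by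
  have hunit : u * star u = 1 := by
    rw [self_mul_star, normSq_eq_one_of_star_mul_mul_eq hx h, coe_one]
  calc x * u = u * star u * x * u := by rw [hunit, one_mul]
    _ = u * (star u * x * u) := by simp only [mul_assoc]
    _ = u * x := by rw [h]

theorem exists_eq_quatC_of_star_mul_quatI_mul_eq {u : ℍ[ℝ]} (h : star u * quatI * u = quatI) :
    ∃ a b : ℝ, a ^ 2 + b ^ 2 = 1 ∧ u = quatC a b := by
  obtain ⟨hJ, hK⟩ := (commute_quatI_iff u).1 (commute_of_star_mul_mul_eq quatI_ne_zero h)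
  refine ⟨u.re, u.imI, ?_, ?_⟩
  · simpa [normSq_def', hJ, hK] using normSq_eq_one_of_star_mul_mul_eq quatI_ne_zero h
  · ext <;> simp [quatC, hJ, hK]

/-- The fibers of the Hopf map `q ↦ (star q) * i * q` are the orbits of left
multiplication by unit complex numbers. -/
theorem hopf_fiber (p q : Quaternion ℝ) (hq : q ≠ 0)
    (h : star p * quatI * p = star q * quatI * q) :
    ∃ a b : ℝ, a ^ 2 + b ^ 2 = 1 ∧ p = quatC a b * q := by
  have hfix : star (p * q⁻¹) * quatI * (p * q⁻¹) = quatI :=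
    calc star (p * q⁻¹) * quatI * (p * q⁻¹) = (star q)⁻¹ * (star p * quatI * p) * q⁻¹ := by
          simp only [star_mul, star_inv₀, mul_assoc]
      _ = ((star q)⁻¹ * star q) * quatI * (q * q⁻¹) := by rw [h]; simp only [mul_assoc]
      _ = quatI := by
          rw [inv_mul_cancel₀ (star_ne_zero.2 hq), mul_inv_cancel₀ hq, one_mul, mul_one]
  obtain ⟨a, b, hab, hu⟩ := exists_eq_quatC_of_star_mul_quatI_mul_eq hfix
  exact ⟨a, b, hab, by rw [← hu, mul_assoc, inv_mul_cancel₀ hq, mul_one]⟩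
end

section
/- Every quaternion can be normalized within its Hopf fiber: for every q ∈ ℍ there exist real numbers a, b with a² + b² = 1 such that, writing α = a + b i ∈ ℍ, the quaternion α * q has i-component equal to 0 and nonnegative real part, and (star (α * q)) * i * (α * q) = (star q) * i * q. -/
/-! Left multiplication by a unit complex number `α` leaves the Hopf image unchanged, because `α`
commutes with `i` and `star α * α = 1`. On the complex part `q.re + q.imI i` of `q` it acts as
complex multiplication, so taking `α = exp (-i arg (q.re + q.imI i))` rotates that part onto the
nonnegative real axis. -/

open Complex in
theorem Complex.exists_norm_eq_one_mul_eq_norm (z : ℂ) : ∃ w : ℂ, ‖w‖ = 1 ∧ w * z = ‖z‖ := by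
  refine ⟨exp (-(arg z : ℂ) * I), by simpa using norm_exp_ofReal_mul_I (-arg z), ?_⟩
  conv_lhs => rw [← norm_mul_exp_arg_mul_I z]
  rw [mul_left_comm, ← exp_add]
  simp

theorem Complex.re_sq_add_im_sq_of_norm_eq_one {w : ℂ} (hw : ‖w‖ = 1) :
    w.re ^ 2 + w.im ^ 2 = 1 := by
  rw [sq, sq, ← normSq_apply, normSq_eq_norm_sq, hw, one_pow]

theorem star_mul_mul_mul_of_commute {R : Type*} [Monoid R] [StarMul R] {u : R} (q x : R)
    (hu : star u * u = 1) (hux : Commute u x) : star (u * q) * x * (u * q) = star q * x * q := by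
  calc star (u * q) * x * (u * q) = star q * (star u * (x * u)) * q := by
        simp only [star_mul, mul_assoc]
    _ = star q * x * q := by rw [← hux.eq, ← mul_assoc (star u), hu, one_mul]

theorem quatC_commute_quatI (a b : ℝ) : Commute (quatC a b) quatI := by
  show quatC a b * quatI = quatI * quatC a b
  ext <;> simp only [Quaternion.re_mul, Quaternion.imI_mul, Quaternion.imJ_mul,
    Quaternion.imK_mul] <;> simp [quatC, quatI]

theorem star_quatC_mul_self {a b : ℝ} (hab : a ^ 2 + b ^ 2 = 1) :
    star (quatC a b) * quatC a b = 1 := by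
  rw [Quaternion.star_mul_self, Quaternion.normSq_def']
  simp [quatC, hab]

theorem re_quatC_mul (a b : ℝ) (q : Quaternion ℝ) :
    (quatC a b * q).re = a * q.re - b * q.imI := by
  rw [Quaternion.re_mul]
  simp [quatC]

theorem imI_quatC_mul (a b : ℝ) (q : Quaternion ℝ) :
    (quatC a b * q).imI = a * q.imI + b * q.re := by
  rw [Quaternion.imI_mul]
  simp [quatC]

/-- Every quaternion can be normalized within its Hopf fiber: there is a unit complex
number `α = a + b i` such that `α * q` has vanishing `i`-component and nonnegative real
part, while the Hopf image is unchanged. -/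
theorem hopf_normalization (q : Quaternion ℝ) :
    ∃ a b : ℝ, a ^ 2 + b ^ 2 = 1 ∧
      (quatC a b * q).imI = 0 ∧
      0 ≤ (quatC a b * q).re ∧
      star (quatC a b * q) * quatI * (quatC a b * q) = star q * quatI * q := by
  obtain ⟨w, hw, hwz⟩ := Complex.exists_norm_eq_one_mul_eq_norm ⟨q.re, q.imI⟩
  have hnorm := Complex.re_sq_add_im_sq_of_norm_eq_one hw
  have hre : w.re * q.re - w.im * q.imI = ‖(⟨q.re, q.imI⟩ : ℂ)‖ := by
    simpa using congrArg Complex.re hwz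
  have him : w.re * q.imI + w.im * q.re = 0 := by
    simpa using congrArg Complex.im hwz
  refine ⟨w.re, w.im, hnorm, ?_, ?_, ?_⟩
  · rw [imI_quatC_mul, him]
  · rw [re_quatC_mul, hre]
    positivity
  · exact star_mul_mul_mul_of_commute q quatI (star_quatC_mul_self hnorm)
      (quatC_commute_quatI _ _)
end

section
/- Every closed n-gon in ℝ³ of total length 2 has a normalized preimage under the coordinatewise Hopf map: let n ≥ 1 and let e : Fin n → ℝ³ satisfy ∑ᵢ eᵢ = 0 and ∑ᵢ ‖eᵢ‖ = 2. Then there exist a : Fin n → ℝ and b : Fin n → ℂ such that aᵢ ≥ 0 for all i, ∑ᵢ aᵢ² = 1, ∑ᵢ |bᵢ|² = 1, ∑ᵢ aᵢ · bᵢ = 0 (as a complex number), and for every i the edge eᵢ has coordinates eᵢ = ( aᵢ² − |bᵢ|², −2 aᵢ Im(bᵢ), 2 aᵢ Re(bᵢ) ). Equivalently, the quaternions qᵢ = aᵢ + Re(bᵢ) j + Im(bᵢ) k form a normalized point of the complex Stiefel manifold V₂(ℂⁿ) with Hopf(qᵢ) = eᵢ for all i. -/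
/-!
Each edge `v` alone has a Hopf preimage `(a, b)` with `a ≥ 0` and `a² + |b|² = ‖v‖`. The remaining
constraints are then linear in the edges: `∑ (aᵢ² + |bᵢ|²) = ∑ ‖eᵢ‖ = 2`,
`∑ (aᵢ² − |bᵢ|²) = ∑ eᵢ 0 = 0` and `2 ∑ aᵢ bᵢ = ∑ (eᵢ 2 − i eᵢ 1) = 0`.
-/

lemma EuclideanSpace.norm_sq_fin_three (v : EuclideanSpace ℝ (Fin 3)) :
    ‖v‖ ^ 2 = v 0 ^ 2 + v 1 ^ 2 + v 2 ^ 2 := by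
  simp [EuclideanSpace.norm_sq_eq, Fin.sum_univ_three]

/-- Off the ray `x = -r`, `a = √((r + x)/2)` and `b = (z - i y)/(2a)`; on that ray `y = z = 0`
and `(a, b) = (0, √r)` works. -/
lemma exists_hopf_preimage_of_sq_eq {x y z r : ℝ} (hr : 0 ≤ r)
    (hxyz : r ^ 2 = x ^ 2 + y ^ 2 + z ^ 2) :
    ∃ (a : ℝ) (b : ℂ), 0 ≤ a ∧ a ^ 2 + ‖b‖ ^ 2 = r ∧ x = a ^ 2 - ‖b‖ ^ 2 ∧
      y = -2 * a * b.im ∧ z = 2 * a * b.re := by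
  have hx : -r ≤ x := by nlinarith [sq_nonneg y, sq_nonneg z]
  rcases hx.eq_or_lt with hx | hx
  · have hy : y = 0 := by nlinarith [sq_nonneg y, sq_nonneg z]
    have hz : z = 0 := by nlinarith [sq_nonneg y, sq_nonneg z]
    refine ⟨0, Real.sqrt r, le_rfl, ?_, ?_, ?_, ?_⟩ <;>
      simp [Complex.norm_real, Real.sq_sqrt hr, hy, hz, ← hx]
  · set a := Real.sqrt ((r + x) / 2)
    have ha : 0 < a := Real.sqrt_pos.mpr (by linarith)
    have ha2 : a ^ 2 = (r + x) / 2 := Real.sq_sqrt (by linarith)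
    have hb2 : ‖(⟨z / (2 * a), -y / (2 * a)⟩ : ℂ)‖ ^ 2 = (r - x) / 2 := by
      rw [Complex.sq_norm, Complex.normSq_mk]
      field_simp
      linear_combination (-2 * (r - x)) * ha2 - hxyz
    refine ⟨a, ⟨z / (2 * a), -y / (2 * a)⟩, ha.le, ?_, ?_, ?_, ?_⟩
    · rw [ha2, hb2]; ring
    · rw [ha2, hb2]; ring
    · field_simp
    · field_simp

lemma exists_hopf_preimage (v : EuclideanSpace ℝ (Fin 3)) :
    ∃ (a : ℝ) (b : ℂ), 0 ≤ a ∧ a ^ 2 + ‖b‖ ^ 2 = ‖v‖ ∧ v 0 = a ^ 2 - ‖b‖ ^ 2 ∧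
      v 1 = -2 * a * b.im ∧ v 2 = 2 * a * b.re :=
  exists_hopf_preimage_of_sq_eq (norm_nonneg v) (EuclideanSpace.norm_sq_fin_three v)

open Finset in
theorem normalized_hopf_preimage_general (n : ℕ)
    (e : Fin n → EuclideanSpace ℝ (Fin 3))
    (hsum : ∑ i, e i = 0) (hlen : ∑ i, ‖e i‖ = 2) :
    ∃ (a : Fin n → ℝ) (b : Fin n → ℂ),
      (∀ i, 0 ≤ a i) ∧
      ∑ i, (a i) ^ 2 = 1 ∧
      ∑ i, ‖b i‖ ^ 2 = 1 ∧
      ∑ i, (a i : ℂ) * b i = 0 ∧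
      ∀ i, e i 0 = (a i) ^ 2 - ‖b i‖ ^ 2 ∧
        e i 1 = -2 * a i * (b i).im ∧
        e i 2 = 2 * a i * (b i).re := by
  choose a b ha hnorm he0 he1 he2 using fun i => exists_hopf_preimage (e i)
  have hcomp (k : Fin 3) : ∑ i, e i k = 0 := by
    simpa using congrArg (· k) hsum
  have hlen' : ∑ i, (a i ^ 2 + ‖b i‖ ^ 2) = 2 := by simp_rw [hnorm, hlen]
  have hdiff : ∑ i, (a i ^ 2 - ‖b i‖ ^ 2) = 0 := by simp_rw [← he0, hcomp]
  rw [sum_add_distrib] at hlen'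
  rw [sum_sub_distrib] at hdiff
  refine ⟨a, b, ha, by linarith, by linarith, ?_, fun i => ⟨he0 i, he1 i, he2 i⟩⟩
  apply Complex.ext
  · have := hcomp 2
    simp_rw [he2, mul_assoc, ← mul_sum] at this
    simpa [Complex.re_sum] using this
  · have := hcomp 1
    simp_rw [he1, mul_assoc, ← mul_sum] at this
    simpa [Complex.im_sum] using this

open Finset in
/-- Every closed `n`-gon in `ℝ³` of total length `2` has a normalized preimage under the
coordinatewise Hopf map: there are vectors `a ∈ ℝⁿ` (entrywise nonnegative) and `b ∈ ℂⁿ`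
with `∑ aᵢ² = 1`, `∑ |bᵢ|² = 1`, `∑ aᵢ bᵢ = 0`, such that every edge is
`eᵢ = (aᵢ² − |bᵢ|², −2 aᵢ Im bᵢ, 2 aᵢ Re bᵢ)`; i.e. the quaternions
`qᵢ = aᵢ + Re(bᵢ) j + Im(bᵢ) k` form a normalized point of `V₂(ℂⁿ)` with
`Hopf(qᵢ) = eᵢ`. -/
theorem normalized_hopf_preimage (n : ℕ) (hn : 1 ≤ n)
    (e : Fin n → EuclideanSpace ℝ (Fin 3))
    (hsum : ∑ i, e i = 0) (hlen : ∑ i, ‖e i‖ = 2) :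
    ∃ (a : Fin n → ℝ) (b : Fin n → ℂ),
      (∀ i, 0 ≤ a i) ∧
      ∑ i, (a i) ^ 2 = 1 ∧
      ∑ i, ‖b i‖ ^ 2 = 1 ∧
      ∑ i, (a i : ℂ) * b i = 0 ∧
      ∀ i, e i 0 = (a i) ^ 2 - ‖b i‖ ^ 2 ∧
        e i 1 = -2 * a i * (b i).im ∧
        e i 2 = 2 * a i * (b i).re :=
  normalized_hopf_preimage_general n e hsum hlen
end
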